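/- Let A be a unital C*-algebra. If Γ : ℓ²(A) → A is a locally adjointable bounded A-linear functional, then for every sequence (γ_i) in A with ∑ γ_i* γ_i norm-convergent, the series ∑_i Γ_i* γ_i converges and defines an element of A, where Γ_i = Γ(e_i)*. -/

import Mathlib

/-!
By additivity and `A`-linearity, the partial sum `∑_{i<n} Γ(eᵢ) γᵢ` is `Γ` applied to the
truncation `∑_{i<n} eᵢ γᵢ` of `γ`. Boundedness of `Γ` then bounds the distance between the
partial sums up to `m` and `n` by `C ‖∑_{m ≤ i < n} γᵢ* γᵢ‖^{1/2}`, so the partial sums form a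
Cauchy sequence in the complete space `A`.
-/

open scoped RightActions
open Filter

/-- The series `∑ f i` is norm-convergent (its partial sums converge). -/
def SeriesConv {A : Type*} [NonUnitalCStarAlgebra A] (f : ℕ → A) : Prop :=
  ∃ l : A, Tendsto (fun n => ∑ i ∈ Finset.range n, f i) atTop (nhds l)

/-- `x : ℕ → A` is an element of the standard Hilbert module `ℓ²(A)`:
the series `∑ xᵢ* xᵢ` is norm-convergent. -/
def MemL2 {A : Type*} [NonUnitalCStarAlgebra A] (x : ℕ → A) : Prop :=
  SeriesConv fun i => star (x i) * x i

/-- `S` is an adjoint of `T` with respect to the `A`-valued inner products. -/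
def IsAdjointPair (A : Type*) {E F : Type*} [Inner A E] [Inner A F]
    (T : E → F) (S : F → E) : Prop :=
  ∀ (x : E) (y : F), (inner A (T x) y : A) = inner A x (S y)

/-- `T` is adjointable: it possesses an adjoint. -/
def HasAdjoint (A : Type*) {E F : Type*} [Inner A E] [Inner A F] (T : E → F) : Prop :=
  ∃ S : F → E, IsAdjointPair A T S

/-- `T` is `A`-linear: it commutes with the right `A`-action. -/
def IsALinear (A : Type*) {E F : Type*} [SMul Aᵐᵒᵖ E] [SMul Aᵐᵒᵖ F] (T : E → F) : Prop :=
  ∀ (x : E) (a : A), T (x <• a) = T x <• a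

section

variable {A : Type*} [NonUnitalCStarAlgebra A]

open Finset

theorem memL2_of_forall_notMem_eq_zero (s : Finset ℕ) {x : ℕ → A} (hx : ∀ i ∉ s, x i = 0) :
    MemL2 x := by
  obtain ⟨N, hN⟩ := s.exists_nat_subset_range
  refine ⟨∑ i ∈ s, star (x i) * x i, tendsto_atTop_of_eventually_const (i₀ := N) fun n hn => ?_⟩
  refine (sum_subset (hN.trans (range_subset_range.2 hn)) fun i _ hi => ?_).symm
  simp [hx i hi]

theorem memL2_single (i : ℕ) (a : A) : MemL2 (Pi.single i a) :=
  memL2_of_forall_notMem_eq_zero {i} fun j hj => by simp_all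

theorem memL2_sum_single (s : Finset ℕ) (x : ℕ → A) : MemL2 (∑ i ∈ s, Pi.single i (x i)) :=
  memL2_of_forall_notMem_eq_zero s fun j hj => by simp [hj]

theorem tsum_star_mul_self_sum_single (s : Finset ℕ) (x : ℕ → A) :
    ∑' j, star ((∑ i ∈ s, Pi.single i (x i) : ℕ → A) j) * (∑ i ∈ s, Pi.single i (x i) : ℕ → A) j
      = ∑ i ∈ s, star (x i) * x i := by
  rw [tsum_eq_sum (s := s) fun j hj => by simp [hj]]
  exact sum_congr rfl fun j hj => by simp [hj]

theorem map_sum_single {E : Type*} [AddCancelCommMonoid E] {Γ : (ℕ → A) → E}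
    (hadd : ∀ x y : ℕ → A, MemL2 x → MemL2 y → Γ (x + y) = Γ x + Γ y)
    (s : Finset ℕ) (x : ℕ → A) :
    Γ (∑ i ∈ s, Pi.single i (x i)) = ∑ i ∈ s, Γ (Pi.single i (x i)) := by
  induction s using Finset.induction_on with
  | empty => simpa using hadd 0 0 (memL2_sum_single ∅ x) (memL2_sum_single ∅ x)
  | insert a s ha ih =>
    rw [sum_insert ha, sum_insert ha, add_comm, hadd _ _ (memL2_sum_single s x), ih, add_comm]
    exact memL2_single a (x a)

variable {E : Type*} [NormedAddCommGroup E] {Γ : (ℕ → A) → E}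

theorem norm_sum_map_single_le
    (hadd : ∀ x y : ℕ → A, MemL2 x → MemL2 y → Γ (x + y) = Γ x + Γ y) {C : ℝ}
    (hC : ∀ x : ℕ → A, MemL2 x → ‖Γ x‖ ≤ C * Real.sqrt ‖∑' i, star (x i) * x i‖)
    (s : Finset ℕ) (x : ℕ → A) :
    ‖∑ i ∈ s, Γ (Pi.single i (x i))‖ ≤ C * Real.sqrt ‖∑ i ∈ s, star (x i) * x i‖ := by
  rw [← map_sum_single hadd, ← tsum_star_mul_self_sum_single]
  exact hC _ (memL2_sum_single s x)

theorem cauchySeq_sum_range_map_single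
    (hadd : ∀ x y : ℕ → A, MemL2 x → MemL2 y → Γ (x + y) = Γ x + Γ y) {C : ℝ}
    (hC : ∀ x : ℕ → A, MemL2 x → ‖Γ x‖ ≤ C * Real.sqrt ‖∑' i, star (x i) * x i‖)
    {x : ℕ → A} (hx : MemL2 x) :
    CauchySeq fun n => ∑ i ∈ range n, Γ (Pi.single i (x i)) := by
  set S := fun n => ∑ i ∈ range n, star (x i) * x i
  have hdist : ∀ m n, dist (∑ i ∈ range m, Γ (Pi.single i (x i)))
      (∑ i ∈ range n, Γ (Pi.single i (x i))) ≤ |C| * Real.sqrt (dist (S m) (S n)) := by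
    intro m n
    wlog hmn : m ≤ n generalizing m n
    · rw [dist_comm, dist_comm (S m)]
      exact this n m (le_of_not_ge hmn)
    rw [dist_comm, dist_eq_norm, dist_comm, dist_eq_norm, ← sum_Ico_eq_sub _ hmn,
      ← sum_Ico_eq_sub _ hmn]
    exact (norm_sum_map_single_le hadd hC _ x).trans
      (mul_le_mul_of_nonneg_right (le_abs_self C) (Real.sqrt_nonneg _))
  obtain ⟨l, hl⟩ := hx
  have hS := cauchySeq_iff_tendsto_dist_atTop_0.1 hl.cauchySeq
  refine cauchySeq_iff_tendsto_dist_atTop_0.2 <|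
    squeeze_zero (fun _ => dist_nonneg) (fun p => hdist p.1 p.2) ?_
  simpa using hS.sqrt.const_mul |C|

end

variable {A : Type*} [CStarAlgebra A] [PartialOrder A] [StarOrderedRing A]

theorem locallyAdjointable_functional_series_convergence_general (Γ : (ℕ → A) → A)
    (hadd : ∀ x y : ℕ → A, MemL2 x → MemL2 y → Γ (x + y) = Γ x + Γ y)
    (hAlin : ∀ (x : ℕ → A) (a : A), MemL2 x → Γ (fun i => x i * a) = Γ x * a)
    (hbdd : ∃ C : ℝ, ∀ x : ℕ → A, MemL2 x →
      ‖Γ x‖ ≤ C * Real.sqrt ‖∑' i, star (x i) * x i‖)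
    (γ : ℕ → A) (hγ : SeriesConv fun i => star (γ i) * γ i) :
    SeriesConv fun i => Γ (Pi.single i 1) * γ i := by
  obtain ⟨C, hC⟩ := hbdd
  have hsingle : ∀ i, Γ (Pi.single i (γ i)) = Γ (Pi.single i 1) * γ i := fun i => by
    rw [← hAlin _ _ (memL2_single i 1)]
    congr 1
    ext j
    simpa using Pi.single_mul_left_apply i j (1 : A) fun _ => γ i
  obtain ⟨l, hl⟩ := cauchySeq_tendsto_of_complete (cauchySeq_sum_range_map_single hadd hC hγ)
  exact ⟨l, by simpa only [hsingle] using hl⟩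

/-- If `A` is unital and `Γ : ℓ²(A) → A` is a locally adjointable bounded `A`-linear
functional, then for every sequence `(γᵢ)` with `∑ γᵢ* γᵢ` norm-convergent the series
`∑ Γᵢ* γᵢ = ∑ Γ(eᵢ) γᵢ` converges in norm (where `Γᵢ = Γ(eᵢ)*`). -/
theorem locallyAdjointable_functional_series_convergence (Γ : (ℕ → A) → A)
    (hadd : ∀ x y : ℕ → A, MemL2 x → MemL2 y → Γ (x + y) = Γ x + Γ y)
    (hsmul : ∀ (c : ℂ) (x : ℕ → A), MemL2 x → Γ (c • x) = c • Γ x)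
    (hAlin : ∀ (x : ℕ → A) (a : A), MemL2 x → Γ (fun i => x i * a) = Γ x * a)
    (hbdd : ∃ C : ℝ, ∀ x : ℕ → A, MemL2 x →
      ‖Γ x‖ ≤ C * Real.sqrt ‖∑' i, star (x i) * x i‖)
    -- local adjointability: `Γ ∘ γ` is adjointable for every adjointable `γ : A → ℓ²(A)`,
    -- the latter being given by sequences with `∑ γᵢ* γᵢ` norm-convergent
    (hloc : ∀ γ : ℕ → A, SeriesConv (fun i => star (γ i) * γ i) →
      ∃ S : A → A, ∀ a b : A, star (Γ fun i => γ i * a) * b = star a * S b)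
    (γ : ℕ → A) (hγ : SeriesConv fun i => star (γ i) * γ i) :
    SeriesConv fun i => Γ (Pi.single i 1) * γ i :=
  locallyAdjointable_functional_series_convergence_general Γ hadd hAlin hbdd γ hγ
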